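/- arXiv:2410.07359 — 2 statements merged into one kernel-verified Lean document; each statement's English description precedes it below -/
import Mathlib

section
/- For a finite MDP with target set F and reachability values, if a (possibly history-dependent) policy achieves probability ≥ p of reaching F from some state, then there exists a stationary (memoryless) deterministic policy achieving probability ≥ p of reaching F from that state; equivalently, the supremum of reachability probabilities over all policies is attained by a stationary deterministic policy. -/
open Finset

/-- Probability of hitting the absorbing target `F` within `k` steps under a
stationary deterministic policy `σ` in a finite MDP with kernel `P`. -/
noncomputable def sreach {S A : Type*} [Fintype S] (F : Set S) [DecidablePred (· ∈ F)]
    (P : S → A → S → ℝ) (σ : S → A) : ℕ → S → ℝ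
  | 0 => fun s => if s ∈ F then 1 else 0
  | k + 1 => fun s => if s ∈ F then 1 else ∑ s', P s (σ s) s' * sreach F P σ k s'

/-- Probability of hitting the absorbing target `F` within `k` steps under a
history-dependent policy `π : List S → A`, given the history `h` so far. -/
noncomputable def hreach {S A : Type*} [Fintype S] (F : Set S) [DecidablePred (· ∈ F)]
    (P : S → A → S → ℝ) (π : List S → A) : ℕ → List S → S → ℝ
  | 0, _, s => if s ∈ F then 1 else 0
  | k + 1, h, s => if s ∈ F then 1 else
      ∑ s', P s (π (h ++ [s])) s' * hreach F P π k (h ++ [s]) s'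

/-!
Let `σ` be a stationary deterministic policy maximising `∑ₛ Vσ s`, where `Vσ` is the probability
of ever reaching `F` under `σ`. Then `Vσ` is excessive: `∑ₛ' P s a s' * Vσ s' ≤ Vσ s` for all
`s ∉ F` and all actions `a`. Otherwise switching `σ` to `a` at `s` gives a policy `σ'` with
`Vσ ≤ Vσ'` and `Vσ s < Vσ' s`, contradicting maximality. The inequality `Vσ ≤ Vσ'` is the delicate
point: on the set where `Vσ - Vσ'` attains a positive maximum, `σ'` never moves out, so `Vσ' = 0`
there; this set is closed under `σ` as well unless it contains `s`, and both alternatives are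
contradictory. An excessive function that is `1` on `F` and nonnegative dominates, by induction
on the horizon, the reachability probabilities of every history-dependent policy.
-/

open Filter Topology

section WeightedSum

variable {ι : Type*} [Fintype ι] {w x : ι → ℝ} {c : ℝ}

theorem sum_mul_le_of_le_on_support (hw0 : ∀ i, 0 ≤ w i) (hw1 : ∑ i, w i = 1)
    (hx : ∀ i, 0 < w i → x i ≤ c) : ∑ i, w i * x i ≤ c :=
  calc ∑ i, w i * x i ≤ ∑ i, w i * c := by
        refine sum_le_sum fun i _ => ?_
        rcases (hw0 i).eq_or_lt with hi | hi
        · simp [← hi]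
        · exact mul_le_mul_of_nonneg_left (hx i hi) hi.le
    _ = c := by rw [← sum_mul, hw1, one_mul]

theorem eq_of_le_of_le_sum_mul (hw0 : ∀ i, 0 ≤ w i) (hw1 : ∑ i, w i = 1)
    (hx : ∀ i, x i ≤ c) (hc : c ≤ ∑ i, w i * x i) {i : ι} (hi : 0 < w i) : x i = c := by
  have hle : ∀ j ∈ univ, w j * x j ≤ w j * c := fun j _ =>
    mul_le_mul_of_nonneg_left (hx j) (hw0 j)
  have hsum : ∑ j, w j * x j = ∑ j, w j * c :=
    le_antisymm (sum_le_sum hle) (by rwa [← sum_mul, hw1, one_mul])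
  exact mul_left_cancel₀ hi.ne' ((sum_eq_sum_iff_of_le hle).1 hsum i (mem_univ i))

end WeightedSum

section Reachability

variable {S A : Type*} [Fintype S] (F : Set S) [DecidablePred (· ∈ F)] (P : S → A → S → ℝ)

noncomputable def reachProb (σ : S → A) (s : S) : ℝ := ⨆ k, sreach F P σ k s

def IsClosedUnder (σ : S → A) (T : Set S) : Prop :=
  ∀ t ∈ T, ∀ u, 0 < P t (σ t) u → u ∈ T

variable {F P}

theorem sreach_of_mem (σ : S → A) (k : ℕ) {s : S} (hs : s ∈ F) : sreach F P σ k s = 1 := by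
  cases k <;> simp [sreach, hs]

theorem sreach_nonneg (hP0 : ∀ s a s', 0 ≤ P s a s') (σ : S → A) :
    ∀ k s, 0 ≤ sreach F P σ k s
  | 0, s => by by_cases hs : s ∈ F <;> simp [sreach, hs]
  | k + 1, s => by
    by_cases hs : s ∈ F
    · simp [sreach, hs]
    · simp only [sreach, hs, if_false]
      exact sum_nonneg fun u _ => mul_nonneg (hP0 _ _ u) (sreach_nonneg hP0 σ k u)

theorem sreach_le_one (hP0 : ∀ s a s', 0 ≤ P s a s') (hP1 : ∀ s a, ∑ s', P s a s' = 1)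
    (σ : S → A) : ∀ k s, sreach F P σ k s ≤ 1
  | 0, s => by by_cases hs : s ∈ F <;> simp [sreach, hs]
  | k + 1, s => by
    by_cases hs : s ∈ F
    · simp [sreach, hs]
    · simp only [sreach, hs, if_false]
      exact sum_mul_le_of_le_on_support (hP0 s _) (hP1 s _)
        fun u _ => sreach_le_one hP0 hP1 σ k u

theorem sreach_le_succ (hP0 : ∀ s a s', 0 ≤ P s a s') (σ : S → A) :
    ∀ k s, sreach F P σ k s ≤ sreach F P σ (k + 1) s
  | 0, s => by
    by_cases hs : s ∈ F
    · simp [sreach, hs]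
    · simpa [sreach, hs] using sreach_nonneg (F := F) hP0 σ 1 s
  | k + 1, s => by
    by_cases hs : s ∈ F
    · simp [sreach, hs]
    · simp only [sreach, hs, if_false]
      exact sum_le_sum fun u _ =>
        mul_le_mul_of_nonneg_left (sreach_le_succ hP0 σ k u) (hP0 _ _ u)

theorem tendsto_sreach_reachProb (hP0 : ∀ s a s', 0 ≤ P s a s')
    (hP1 : ∀ s a, ∑ s', P s a s' = 1) (σ : S → A) (s : S) :
    Tendsto (fun k => sreach F P σ k s) atTop (𝓝 (reachProb F P σ s)) :=
  tendsto_atTop_ciSup (monotone_nat_of_le_succ fun k => sreach_le_succ hP0 σ k s)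
    ⟨1, by rintro _ ⟨k, rfl⟩; exact sreach_le_one hP0 hP1 σ k s⟩

theorem reachProb_nonneg (hP0 : ∀ s a s', 0 ≤ P s a s') (hP1 : ∀ s a, ∑ s', P s a s' = 1)
    (σ : S → A) (s : S) : 0 ≤ reachProb F P σ s :=
  ge_of_tendsto' (tendsto_sreach_reachProb hP0 hP1 σ s) fun k => sreach_nonneg hP0 σ k s

theorem reachProb_of_mem (σ : S → A) {s : S} (hs : s ∈ F) : reachProb F P σ s = 1 := by
  simp [reachProb, sreach_of_mem σ _ hs]

theorem reachProb_eq_sum (hP0 : ∀ s a s', 0 ≤ P s a s') (hP1 : ∀ s a, ∑ s', P s a s' = 1)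
    (σ : S → A) {s : S} (hs : s ∉ F) :
    reachProb F P σ s = ∑ u, P s (σ s) u * reachProb F P σ u := by
  have hsucc : Tendsto (fun k => sreach F P σ (k + 1) s) atTop
      (𝓝 (∑ u, P s (σ s) u * reachProb F P σ u)) := by
    simp only [sreach, hs, if_false]
    exact tendsto_finsetSum _ fun u _ => (tendsto_sreach_reachProb hP0 hP1 σ u).const_mul _
  exact tendsto_nhds_unique ((tendsto_sreach_reachProb hP0 hP1 σ s).comp
    (tendsto_add_atTop_nat 1)) hsucc

theorem reachProb_eq_zero_of_isClosedUnder (hP0 : ∀ s a s', 0 ≤ P s a s') {σ : S → A}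
    {T : Set S} (hT : IsClosedUnder P σ T) (hTF : ∀ t ∈ T, t ∉ F) {t : S} (ht : t ∈ T) :
    reachProb F P σ t = 0 := by
  have hzero : ∀ k, ∀ t ∈ T, sreach F P σ k t = 0 := by
    intro k
    induction k with
    | zero => intro t ht; simp [sreach, hTF t ht]
    | succ k ih =>
      intro t ht
      simp only [sreach, hTF t ht, if_false]
      refine sum_eq_zero fun u _ => ?_
      rcases (hP0 t (σ t) u).eq_or_lt with hu | hu
      · simp [← hu]
      · simp [ih u (hT t ht u hu)]
  simp [reachProb, hzero _ t ht]

theorem exists_isClosedUnder_of_lt_reachProb (hP0 : ∀ s a s', 0 ≤ P s a s')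
    (hP1 : ∀ s a, ∑ s', P s a s' = 1) {τ : S → A} {x : S → ℝ} (hF : ∀ t ∈ F, x t ≤ 1)
    (hsub : ∀ t ∉ F, x t ≤ ∑ u, P t (τ t) u * x u) (hlt : ∃ t, reachProb F P τ t < x t) :
    ∃ T : Set S, T.Nonempty ∧ IsClosedUnder P τ T ∧ (∀ t ∈ T, t ∉ F) ∧
      ∃ M > 0, ∀ t ∈ T, x t = M := by
  obtain ⟨t₁, ht₁⟩ := hlt
  set d : S → ℝ := fun t => x t - reachProb F P τ t
  have : Nonempty S := ⟨t₁⟩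
  obtain ⟨t₀, ht₀⟩ := Finite.exists_max d
  have hM : 0 < d t₀ := (sub_pos.2 ht₁).trans_le (ht₀ t₁)
  set T : Set S := {t | d t = d t₀}
  have hTF : ∀ t ∈ T, t ∉ F := fun t ht htF => by
    have : d t ≤ 0 := by simp [d, reachProb_of_mem τ htF, hF t htF]
    linarith [ht.symm ▸ hM]
  have hT : IsClosedUnder P τ T := fun t ht u hu => by
    refine eq_of_le_of_le_sum_mul (hP0 t (τ t)) (hP1 t (τ t)) ht₀ ?_ hu
    calc d t₀ = d t := ht.symm
      _ ≤ ∑ u, P t (τ t) u * x u - ∑ u, P t (τ t) u * reachProb F P τ u := by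
        rw [← reachProb_eq_sum hP0 hP1 τ (hTF t ht)]
        exact sub_le_sub_right (hsub t (hTF t ht)) _
      _ = ∑ u, P t (τ t) u * d u := by simp only [d, mul_sub, sum_sub_distrib]
  refine ⟨T, ⟨t₀, rfl⟩, hT, hTF, d t₀, hM, fun t ht => ?_⟩
  calc x t = d t := by simp [d, reachProb_eq_zero_of_isClosedUnder hP0 hT hTF ht]
    _ = d t₀ := ht

theorem reachProb_le_update (hP0 : ∀ s a s', 0 ≤ P s a s') (hP1 : ∀ s a, ∑ s', P s a s' = 1)
    [DecidableEq S] {σ : S → A} {s : S} {a : A}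
    (ha : reachProb F P σ s < ∑ u, P s a u * reachProb F P σ u) (t : S) :
    reachProb F P σ t ≤ reachProb F P (Function.update σ s a) t := by
  have hsub : ∀ t ∉ F, reachProb F P σ t ≤
      ∑ u, P t (Function.update σ s a t) u * reachProb F P σ u := fun t ht => by
    rcases eq_or_ne t s with rfl | hts
    · simpa using ha.le
    · simpa [hts] using (reachProb_eq_sum hP0 hP1 σ ht).le
  by_contra! hlt
  obtain ⟨T, ⟨t₀, ht₀⟩, hT, hTF, M, hM, hxT⟩ := exists_isClosedUnder_of_lt_reachProb hP0 hP1
    (fun t ht => (reachProb_of_mem σ ht).le) hsub ⟨t, hlt⟩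
  by_cases hsT : s ∈ T
  · have hle : ∑ u, P s a u * reachProb F P σ u ≤ M :=
      sum_mul_le_of_le_on_support (hP0 s a) (hP1 s a) fun u hu =>
        (hxT u (hT s hsT u (by simpa using hu))).le
    linarith [hxT s hsT]
  · have hσT : IsClosedUnder P σ T := fun t ht u hu => by
      have hts : t ≠ s := fun h => hsT (h ▸ ht)
      exact hT t ht u (by simpa [hts] using hu)
    linarith [hxT t₀ ht₀, reachProb_eq_zero_of_isClosedUnder hP0 hσT hTF ht₀]

theorem sum_reachProb_lt_update (hP0 : ∀ s a s', 0 ≤ P s a s')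
    (hP1 : ∀ s a, ∑ s', P s a s' = 1) [DecidableEq S] {σ : S → A} {s : S} {a : A} (hs : s ∉ F)
    (ha : reachProb F P σ s < ∑ u, P s a u * reachProb F P σ u) :
    ∑ t, reachProb F P σ t < ∑ t, reachProb F P (Function.update σ s a) t := by
  have hle := reachProb_le_update hP0 hP1 ha
  refine sum_lt_sum (fun t _ => hle t) ⟨s, mem_univ s, ?_⟩
  calc reachProb F P σ s < ∑ u, P s a u * reachProb F P σ u := ha
    _ ≤ ∑ u, P s a u * reachProb F P (Function.update σ s a) u :=
      sum_le_sum fun u _ => mul_le_mul_of_nonneg_left (hle u) (hP0 s a u)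
    _ = reachProb F P (Function.update σ s a) s := by
      simpa using (reachProb_eq_sum hP0 hP1 (Function.update σ s a) hs).symm

theorem exists_excessive_reachProb [Finite A] [Nonempty A] (hP0 : ∀ s a s', 0 ≤ P s a s')
    (hP1 : ∀ s a, ∑ s', P s a s' = 1) :
    ∃ σ : S → A, ∀ s ∉ F, ∀ a, ∑ u, P s a u * reachProb F P σ u ≤ reachProb F P σ s := by
  classical
  obtain ⟨σ, hσ⟩ := Finite.exists_max fun σ : S → A => ∑ t, reachProb F P σ t
  exact ⟨σ, fun s hs a => not_lt.1 fun ha =>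
    (sum_reachProb_lt_update hP0 hP1 hs ha).not_ge (hσ _)⟩

theorem hreach_le_of_excessive (hP0 : ∀ s a s', 0 ≤ P s a s') {x : S → ℝ}
    (hF : ∀ s ∈ F, 1 ≤ x s) (hx0 : ∀ s, 0 ≤ x s)
    (hx : ∀ s ∉ F, ∀ a, ∑ u, P s a u * x u ≤ x s) (π : List S → A) :
    ∀ k h s, hreach F P π k h s ≤ x s
  | 0, _, s => by by_cases hs : s ∈ F <;> simp [hreach, hs, hF, hx0]
  | k + 1, h, s => by
    by_cases hs : s ∈ F
    · simpa [hreach, hs] using hF s hs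
    · simp only [hreach, hs, if_false]
      exact (sum_le_sum fun u _ => mul_le_mul_of_nonneg_left
        (hreach_le_of_excessive hP0 hF hx0 hx π k _ u) (hP0 _ _ u)).trans (hx s hs _)

end Reachability

theorem stationary_policies_suffice_for_reachability_general
    {S A : Type*} [Fintype S] [Fintype A]
    (F : Set S) [DecidablePred (· ∈ F)]
    (P : S → A → S → ℝ)
    (hP : ∀ s a, (∀ s', 0 ≤ P s a s') ∧ ∑ s', P s a s' = 1)
    (p : ℝ) (s : S) (π : List S → A)
    (h : p ≤ ⨆ k, hreach F P π k [] s) :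
    ∃ σ : S → A, p ≤ ⨆ k, sreach F P σ k s := by
  have hP0 : ∀ s a s', 0 ≤ P s a s' := fun s a => (hP s a).1
  have hP1 : ∀ s a, ∑ s', P s a s' = 1 := fun s a => (hP s a).2
  have : Nonempty A := ⟨π []⟩
  obtain ⟨σ, hσ⟩ := exists_excessive_reachProb (F := F) hP0 hP1
  exact ⟨σ, h.trans <| ciSup_le fun k => hreach_le_of_excessive hP0
    (fun t ht => (reachProb_of_mem σ ht).ge) (reachProb_nonneg hP0 hP1 σ) hσ π k [] s⟩

theorem stationary_policies_suffice_for_reachability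
    {S A : Type*} [Fintype S] [Fintype A] [Nonempty A]
    (F : Set S) [DecidablePred (· ∈ F)]
    (P : S → A → S → ℝ)
    (hP : ∀ s a, (∀ s', 0 ≤ P s a s') ∧ ∑ s', P s a s' = 1)
    (habs : ∀ s ∈ F, ∀ a, ∑ s' ∈ Finset.univ.filter (· ∈ F), P s a s' = 1)
    (p : ℝ) (s : S) (π : List S → A)
    (h : p ≤ ⨆ k, hreach F P π k [] s) :
    ∃ σ : S → A, p ≤ ⨆ k, sreach F P σ k s :=
  stationary_policies_suffice_for_reachability_general F P hP p s π h
end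

section
/- Let events G (good regression event, P(G) ≥ ∏_i(1−δ_i)) and suppose on G the true next state lies in box q' whenever the predicted point lies in the shrunk box q̲'(ε). If the predicted point lies in q̲'(ε) with certainty (indicator 1 − 1_{X∖q̲'(ε)}(Post) = 1), then the probability the true next state lies in q' is at least ∏_i(1−δ_i). Conversely, the probability the true next state lies in q' is at most 1 − (1 − 1_{q̄'(ε)}(Post))·∏_i(1−δ_i), i.e., if the expanded prediction set misses q̄'(ε), then the transition probability is at most 1 − ∏_i(1−δ_i). -/
/-! On `G` the true state is `ε`-close to a point of `Post`. If `Post` lies in the box shrunk by `ε`,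
the box event therefore contains `G`; if `Post` misses the box expanded by `ε`, the box event lies
in `Gᶜ`, whose probability is `1 - μ G`. -/

open MeasureTheory ProbabilityTheory ENNReal Set

section
variable {α : Type*} [AddCommGroup α] [LinearOrder α] [IsOrderedAddMonoid α] {l u e y z : α}

theorem mem_Icc_of_abs_sub_le_of_mem_Icc_add_sub (h : |y - z| ≤ e) (hy : y ∈ Icc (l + e) (u - e)) :
    z ∈ Icc l u := by
  obtain ⟨h₁, h₂⟩ := abs_sub_le_iff.mp h
  exact ⟨(le_sub_iff_add_le.mpr hy.1).trans (sub_le_comm.mp h₁),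
    (sub_le_iff_le_add.mp h₂).trans (le_sub_iff_add_le'.mp hy.2)⟩

theorem mem_Icc_sub_add_of_abs_sub_le_of_mem_Icc (h : |y - z| ≤ e) (hz : z ∈ Icc l u) :
    y ∈ Icc (l - e) (u + e) := by
  obtain ⟨h₁, h₂⟩ := abs_sub_le_iff.mp h
  exact ⟨(sub_le_sub_right hz.1 e).trans (sub_le_comm.mp h₂),
    (sub_le_iff_le_add'.mp h₁).trans (add_le_add_left hz.2 e)⟩

end

theorem measure_le_one_sub_of_subset_compl {Ω : Type*} [MeasurableSpace Ω] {μ : Measure Ω}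
    [IsProbabilityMeasure μ] {A G : Set Ω} {p : ℝ≥0∞} (hG : MeasurableSet G) (hp : p ≤ μ G)
    (hA : A ⊆ Gᶜ) : μ A ≤ 1 - p :=
  calc μ A ≤ μ Gᶜ := measure_mono hA
    _ = 1 - μ G := prob_compl_eq_one_sub hG
    _ ≤ 1 - p := tsub_le_tsub_left hp 1

theorem transition_interval_bounds_single_cell_general
    {Ω : Type*} [MeasurableSpace Ω] (μ : Measure Ω) [IsProbabilityMeasure μ]
    (n : ℕ) (δ : Fin n → ℝ≥0∞)
    (G : Set Ω) (hG : MeasurableSet G) (hPG : ∏ i, (1 - δ i) ≤ μ G)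
    (Z : Ω → Fin n → ℝ) (Post : Set (Fin n → ℝ))
    (l u ε : Fin n → ℝ)
    (hclose : ∀ ω ∈ G, ∃ y ∈ Post, ∀ i, |y i - Z ω i| ≤ ε i) :
    ((Post ⊆ {y | ∀ i, l i + ε i ≤ y i ∧ y i ≤ u i - ε i}) →
        ∏ i, (1 - δ i) ≤ μ {ω | ∀ i, l i ≤ Z ω i ∧ Z ω i ≤ u i}) ∧
      ((Post ∩ {y | ∀ i, l i - ε i ≤ y i ∧ y i ≤ u i + ε i} = ∅) →
        μ {ω | ∀ i, l i ≤ Z ω i ∧ Z ω i ≤ u i} ≤ 1 - ∏ i, (1 - δ i)) := by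
  constructor
  · intro hshrunk
    refine hPG.trans (measure_mono fun ω hω => ?_)
    obtain ⟨y, hy, hyZ⟩ := hclose ω hω
    exact fun i => mem_Icc_of_abs_sub_le_of_mem_Icc_add_sub (hyZ i) (hshrunk hy i)
  · intro hexpanded
    refine measure_le_one_sub_of_subset_compl hG hPG fun ω hω hωG => ?_
    obtain ⟨y, hy, hyZ⟩ := hclose ω hωG
    exact eq_empty_iff_forall_notMem.mp hexpanded y
      ⟨hy, fun i => mem_Icc_sub_add_of_abs_sub_le_of_mem_Icc (hyZ i) (hω i)⟩

theorem transition_interval_bounds_single_cell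
    {Ω : Type*} [MeasurableSpace Ω] (μ : Measure Ω) [IsProbabilityMeasure μ]
    (n : ℕ) (δ : Fin n → ℝ≥0∞) (hδ : ∀ i, δ i ≤ 1)
    (G : Set Ω) (hG : MeasurableSet G) (hPG : ∏ i, (1 - δ i) ≤ μ G)
    (Z : Ω → Fin n → ℝ) (Post : Set (Fin n → ℝ))
    (l u ε : Fin n → ℝ) (hε : ∀ i, 0 ≤ ε i)
    (hclose : ∀ ω ∈ G, ∃ y ∈ Post, ∀ i, |y i - Z ω i| ≤ ε i)
    (hmeas : MeasurableSet {ω | ∀ i, l i ≤ Z ω i ∧ Z ω i ≤ u i}) :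
    ((Post ⊆ {y | ∀ i, l i + ε i ≤ y i ∧ y i ≤ u i - ε i}) →
        ∏ i, (1 - δ i) ≤ μ {ω | ∀ i, l i ≤ Z ω i ∧ Z ω i ≤ u i}) ∧
      ((Post ∩ {y | ∀ i, l i - ε i ≤ y i ∧ y i ≤ u i + ε i} = ∅) →
        μ {ω | ∀ i, l i ≤ Z ω i ∧ Z ω i ≤ u i} ≤ 1 - ∏ i, (1 - δ i)) :=
  transition_interval_bounds_single_cell_general μ n δ G hG hPG Z Post l u ε hclose
end
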